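/- Let X₁,…,Xₙ be compacta, Aᵢ ⊆ Xᵢ closed subsets, and μᵢ ∈ MXᵢ capacities such that μᵢ(Xᵢ ∖ Aᵢ) = 0 for each i ∈ {1,…,n} (the value on the open complement taken via the sup-extension to open sets). Then for any continuous t-norm ∗ the tensor product satisfies ⊛̃ᵢ₌₁ⁿ μᵢ( ∏ᵢ₌₁ⁿ Xᵢ ∖ ∏ᵢ₌₁ⁿ Aᵢ ) = 0. -/

import Mathlib

/-!
Induct on the number of factors, splitting off the first coordinate. For the binary tensor
product of `μ₁` and `μ₂` evaluated on a closed `B` missing `A₁ × A₂`: every slice `B_x` with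
`x ∈ A₁` misses `A₂`, so `μ₂(B_x) = 0`. By compactness of the second factor (tube lemma)
`x ↦ μ₂(B_x)` is upper semicontinuous, so for `t > 0` the level set `{x | t ≤ μ₂(B_x)}` is a
closed subset of `X₁ ∖ A₁` and has `μ₁`-capacity `0`; since `0 ∗ t = s ∗ 0 = 0`, every term
of the supremum defining the tensor product vanishes.
-/

open Set TopologicalSpace

universe u v

/-- A (upper-semicontinuous) capacity on a topological space `X`:
a normalized monotone set function on the closed subsets, upper semicontinuous
in the sense of Zarichnyi–Nykyforchyn. -/
structure Capacity (X : Type u) [TopologicalSpace X] : Type u where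
  toFun : Closeds X → ℝ
  empty' : toFun ⊥ = 0
  univ' : toFun ⊤ = 1
  mono' : ∀ F G : Closeds X, F ≤ G → toFun F ≤ toFun G
  usc' : ∀ (F : Closeds X) (a : ℝ), toFun F < a →
    ∃ O : Set X, IsOpen O ∧ (F : Set X) ⊆ O ∧ ∀ B : Closeds X, (B : Set X) ⊆ O → toFun B < a

namespace Capacity

variable {X : Type u} [TopologicalSpace X]

/-- Value of a capacity on (the closure of) an arbitrary set; on closed sets this is
the value of the capacity. -/
def cval (ν : Capacity X) (A : Set X) : ℝ := ν.toFun ⟨closure A, isClosed_closure⟩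

/-- The sup-extension of a capacity to open sets:
`ν(U) = sup {ν K : K closed, K ⊆ U}`. -/
noncomputable def oval (ν : Capacity X) (U : Set X) : ℝ :=
  sSup {r : ℝ | ∃ K : Closeds X, (K : Set X) ⊆ U ∧ ν.toFun K = r}

end Capacity

/-- The topology on the space `MX` of capacities, generated by the subbase
`O₋(F,a) = {c : c(F) < a}` (`F` closed) and `O₊(U,a) = {c : c(U) > a}` (`U` open). -/
instance capacityTopology (X : Type u) [TopologicalSpace X] : TopologicalSpace (Capacity X) :=
  TopologicalSpace.generateFrom
    ({S | ∃ (F : Closeds X) (a : ℝ), a ∈ Icc (0:ℝ) 1 ∧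
        S = {c : Capacity X | c.toFun F < a}} ∪
     {S | ∃ U : Set X, IsOpen U ∧ ∃ a ∈ Icc (0:ℝ) 1,
        S = {c : Capacity X | a < c.oval U}})

/-- A possibility capacity: `ν(A ∪ B) = max (ν A) (ν B)` on closed sets. -/
def IsPossibility {X : Type u} [TopologicalSpace X] (ν : Capacity X) : Prop :=
  ∀ A B : Closeds X, ν.toFun (A ⊔ B) = max (ν.toFun A) (ν.toFun B)

/-- A necessity capacity: `ν(A ∩ B) = min (ν A) (ν B)` on closed sets. -/
def IsNecessity {X : Type u} [TopologicalSpace X] (ν : Capacity X) : Prop :=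
  ∀ A B : Closeds X, ν.toFun (A ⊓ B) = min (ν.toFun A) (ν.toFun B)

/-- A triangular norm on `[0,1]`. -/
structure Tnorm : Type where
  toFun : ℝ → ℝ → ℝ
  mem' : ∀ s ∈ Icc (0:ℝ) 1, ∀ t ∈ Icc (0:ℝ) 1, toFun s t ∈ Icc (0:ℝ) 1
  comm' : ∀ s ∈ Icc (0:ℝ) 1, ∀ t ∈ Icc (0:ℝ) 1, toFun s t = toFun t s
  assoc' : ∀ s ∈ Icc (0:ℝ) 1, ∀ t ∈ Icc (0:ℝ) 1, ∀ r ∈ Icc (0:ℝ) 1,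
    toFun (toFun s t) r = toFun s (toFun t r)
  mono' : ∀ s₁ ∈ Icc (0:ℝ) 1, ∀ s₂ ∈ Icc (0:ℝ) 1, ∀ t₁ ∈ Icc (0:ℝ) 1, ∀ t₂ ∈ Icc (0:ℝ) 1,
    s₁ ≤ s₂ → t₁ ≤ t₂ → toFun s₁ t₁ ≤ toFun s₂ t₂
  one' : ∀ s ∈ Icc (0:ℝ) 1, toFun s 1 = s

/-- Continuity of a t-norm (on the unit square). -/
def Tnorm.Cont (star : Tnorm) : Prop :=
  ContinuousOn (fun q : ℝ × ℝ => star.toFun q.1 q.2) (Icc 0 1 ×ˢ Icc 0 1)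

/-- The t-normed (fuzzy) integral `∫^{∨∗} f dν = sup { ν(f⁻¹[t,1]) ∗ t : t ∈ [0,1] }`. -/
noncomputable def tInt {X : Type u} [TopologicalSpace X] (star : Tnorm) (ν : Capacity X) (f : X → ℝ) : ℝ :=
  sSup {r : ℝ | ∃ t ∈ Icc (0:ℝ) 1, r = star.toFun (ν.cval (f ⁻¹' Icc t 1)) t}
/-- Value of the binary tensor product generated by a t-norm `∗`:
`μ₁ ⊛̃ μ₂(B) = sup { μ₁({x : μ₂({y : (x,y) ∈ B}) ≥ t}) ∗ t : t ∈ [0,1] }`. -/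
noncomputable def tensorVal₂ {X : Type u} {Y : Type v} [TopologicalSpace X] [TopologicalSpace Y]
    (ast : Tnorm) (μ₁ : Capacity X) (μ₂ : Capacity Y) (B : Set (X × Y)) : ℝ :=
  sSup {r : ℝ | ∃ t ∈ Icc (0:ℝ) 1,
    r = ast.toFun (μ₁.cval {x : X | t ≤ μ₂.cval {y : Y | (x, y) ∈ B}}) t}

/-- `IsTensorRec ast μ τ` says that `τ` is the `m`-fold tensor product (generated by
the t-norm `ast`) of the capacities `μ j`, defined by iteration of the binary tensor
product, splitting off the first coordinate at each step. -/
def IsTensorRec (ast : Tnorm) : ∀ {m : ℕ} {X : Fin m → Type u}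
    [inst : ∀ j, TopologicalSpace (X j)],
    (∀ j, Capacity (X j)) → Capacity (∀ j, X j) → Prop
  | 0, _, _, _, _ => True
  | (m+1), X, inst, μ, τ =>
    letI := inst
    ∃ σ : Capacity (∀ k : Fin m, X ((0 : Fin (m+1)).succAbove k)),
      IsTensorRec ast (fun k => μ ((0 : Fin (m+1)).succAbove k)) σ ∧
      ∀ B : Set (∀ j, X j), IsClosed B →
        τ.cval B = tensorVal₂ ast (μ 0) σ
          ((fun z : ∀ j, X j =>
            ((z 0 : X 0), fun k : Fin m => z ((0 : Fin (m+1)).succAbove k))) '' B)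

namespace Capacity

variable {X : Type u} [TopologicalSpace X] (ν : Capacity X)

lemma toFun_nonneg (F : Closeds X) : 0 ≤ ν.toFun F :=
  ν.empty' ▸ ν.mono' _ _ bot_le

lemma toFun_le_one (F : Closeds X) : ν.toFun F ≤ 1 :=
  ν.univ' ▸ ν.mono' _ _ le_top

lemma cval_of_isClosed {A : Set X} (hA : IsClosed A) : ν.cval A = ν.toFun ⟨A, hA⟩ := by
  simp only [cval, hA.closure_eq]

lemma oval_eq_zero_iff {U : Set X} :
    ν.oval U = 0 ↔ ∀ K : Closeds X, (K : Set X) ⊆ U → ν.toFun K = 0 := by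
  have hbdd : BddAbove {r | ∃ K : Closeds X, (K : Set X) ⊆ U ∧ ν.toFun K = r} :=
    ⟨1, by rintro _ ⟨K, -, rfl⟩; exact ν.toFun_le_one K⟩
  have hzero : (0 : ℝ) ∈ {r | ∃ K : Closeds X, (K : Set X) ⊆ U ∧ ν.toFun K = r} :=
    ⟨⊥, empty_subset U, ν.empty'⟩
  constructor
  · intro h K hK
    exact le_antisymm (h ▸ le_csSup hbdd ⟨K, hK, rfl⟩) (ν.toFun_nonneg K)
  · intro h
    refine le_antisymm (csSup_le ⟨0, hzero⟩ ?_) (le_csSup hbdd hzero)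
    rintro _ ⟨K, hK, rfl⟩
    exact (h K hK).le

lemma cval_closeds (K : Closeds X) : ν.cval K = ν.toFun K :=
  ν.cval_of_isClosed K.isClosed

lemma cval_eq_zero_of_subset {U A : Set X} (hU : ν.oval U = 0) (hA : IsClosed A)
    (hAU : A ⊆ U) : ν.cval A = 0 := by
  rw [ν.cval_of_isClosed hA]
  exact ν.oval_eq_zero_iff.1 hU ⟨A, hA⟩ hAU

end Capacity

namespace Tnorm

variable (ast : Tnorm)

lemma zero_left {t : ℝ} (ht : t ∈ Icc (0 : ℝ) 1) : ast.toFun 0 t = 0 := by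
  have h0 : (0 : ℝ) ∈ Icc (0 : ℝ) 1 := left_mem_Icc.2 zero_le_one
  have h1 : (1 : ℝ) ∈ Icc (0 : ℝ) 1 := right_mem_Icc.2 zero_le_one
  refine le_antisymm ?_ (ast.mem' 0 h0 t ht).1
  calc ast.toFun 0 t ≤ ast.toFun 0 1 := ast.mono' 0 h0 0 h0 t ht 1 h1 le_rfl ht.2
    _ = 0 := ast.one' 0 h0

lemma zero_right {s : ℝ} (hs : s ∈ Icc (0 : ℝ) 1) : ast.toFun s 0 = 0 := by
  rw [ast.comm' s hs 0 (left_mem_Icc.2 zero_le_one)]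
  exact ast.zero_left hs

end Tnorm

theorem Capacity.upperSemicontinuous_cval_slice {X : Type u} {Y : Type v} [TopologicalSpace X]
    [TopologicalSpace Y] [CompactSpace Y] (σ : Capacity Y) {B : Set (X × Y)}
    (hB : IsClosed B) : UpperSemicontinuous fun x => σ.cval {y | (x, y) ∈ B} := by
  have hslice : ∀ x, IsClosed {y | (x, y) ∈ B} := fun x =>
    hB.preimage (Continuous.prodMk_right x)
  intro x₀ t hx₀
  dsimp only at hx₀ ⊢
  rw [σ.cval_of_isClosed (hslice x₀)] at hx₀
  obtain ⟨O, hO, hx₀O, hO_lt⟩ := σ.usc' _ t hx₀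
  have htube : IsOpen {x | {y | (x, y) ∈ B} ⊆ O} := by
    have hclosed : IsClosed (Prod.fst '' (B ∩ univ ×ˢ Oᶜ)) :=
      isClosedMap_fst_of_compactSpace _ (hB.inter (isClosed_univ.prod hO.isClosed_compl))
    convert hclosed.isOpen_compl using 1
    ext x
    simp [subset_def]
  filter_upwards [htube.mem_nhds hx₀O] with x hx
  rw [σ.cval_of_isClosed (hslice x)]
  exact hO_lt ⟨_, hslice x⟩ hx

theorem tensorVal₂_eq_zero_of_disjoint {X : Type u} {Y : Type v} [TopologicalSpace X]
    [TopologicalSpace Y] [CompactSpace Y] (ast : Tnorm) {μ₁ : Capacity X} {μ₂ : Capacity Y}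
    {A₁ : Set X} {A₂ : Set Y} (h₁ : μ₁.oval A₁ᶜ = 0) (h₂ : μ₂.oval A₂ᶜ = 0)
    {B : Set (X × Y)} (hB : IsClosed B) (hBA : Disjoint B (A₁ ×ˢ A₂)) :
    tensorVal₂ ast μ₁ μ₂ B = 0 := by
  suffices h : ∀ t ∈ Icc (0 : ℝ) 1,
      ast.toFun (μ₁.cval {x | t ≤ μ₂.cval {y | (x, y) ∈ B}}) t = 0 by
    have hterms : {r : ℝ | ∃ t ∈ Icc (0 : ℝ) 1,
        r = ast.toFun (μ₁.cval {x | t ≤ μ₂.cval {y | (x, y) ∈ B}}) t} = {0} := by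
      refine eq_singleton_iff_unique_mem.2 ⟨⟨0, left_mem_Icc.2 zero_le_one, ?_⟩, ?_⟩
      · exact (h 0 (left_mem_Icc.2 zero_le_one)).symm
      · rintro _ ⟨t, ht, rfl⟩
        exact h t ht
    rw [tensorVal₂, hterms, csSup_singleton]
  intro t ht
  rcases ht.1.eq_or_lt with rfl | ht₀
  · exact ast.zero_right ⟨μ₁.toFun_nonneg _, μ₁.toFun_le_one _⟩
  have hslice : ∀ x ∈ A₁, μ₂.cval {y | (x, y) ∈ B} = 0 := by
    intro x hx
    have hsub : {y | (x, y) ∈ B} ⊆ A₂ᶜ := fun _ hy hyA => disjoint_left.1 hBA hy ⟨hx, hyA⟩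
    exact μ₂.cval_eq_zero_of_subset h₂ (hB.preimage (Continuous.prodMk_right x)) hsub
  have hlevel : {x | t ≤ μ₂.cval {y | (x, y) ∈ B}} ⊆ A₁ᶜ := fun x hxt hx => by
    rw [mem_ofPred_eq, hslice x hx] at hxt
    linarith
  have hlevel_closed : IsClosed {x | t ≤ μ₂.cval {y | (x, y) ∈ B}} :=
    (μ₂.upperSemicontinuous_cval_slice hB).isClosed_preimage t
  rw [μ₁.cval_eq_zero_of_subset h₁ hlevel_closed hlevel]
  exact ast.zero_left ht

def Homeomorph.piFinSuccAbove {n : ℕ} (X : Fin (n + 1) → Type u)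
    [∀ i, TopologicalSpace (X i)] (i : Fin (n + 1)) :
    (∀ j, X j) ≃ₜ X i × ∀ j, X (i.succAbove j) where
  toEquiv := (Fin.insertNthEquiv X i).symm
  continuous_toFun := (continuous_apply i).prodMk (continuous_pi fun _ => continuous_apply _)
  continuous_invFun := continuous_fst.finInsertNth i continuous_snd

lemma Homeomorph.piFinSuccAbove_preimage_prod_pi {n : ℕ} {X : Fin (n + 1) → Type u}
    [∀ i, TopologicalSpace (X i)] (i : Fin (n + 1)) (A : ∀ j, Set (X j)) :
    piFinSuccAbove X i ⁻¹' (A i ×ˢ univ.pi fun j => A (i.succAbove j)) = univ.pi A := by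
  ext z
  simp only [mem_preimage, mem_prod, mem_univ_pi]
  rw [Fin.forall_iff_succAbove i]
  rfl

theorem tensor_product_supported_in_product_general {m : ℕ} (X : Fin m → Type u)
    [∀ j, TopologicalSpace (X j)] [∀ j, CompactSpace (X j)]
    (ast : Tnorm)
    (A : ∀ j, Set (X j))
    (μ : ∀ j, Capacity (X j)) (hμ : ∀ j, (μ j).oval ((A j)ᶜ) = 0)
    (τ : Capacity (∀ j, X j)) (hτ : IsTensorRec ast μ τ) :
    τ.oval ((Set.univ.pi A)ᶜ) = 0 := by
  induction m with
  | zero =>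
    have hpi : univ.pi A = univ := eq_univ_of_forall fun _ i _ => i.elim0
    refine τ.oval_eq_zero_iff.2 fun K hK => ?_
    rw [hpi, compl_univ, subset_empty_iff] at hK
    rw [show K = ⊥ from Closeds.ext hK, τ.empty']
  | succ n ih =>
    obtain ⟨σ, hσ, hτσ⟩ := hτ
    have hσA := ih _ (fun k => A (Fin.succAbove 0 k)) _ (fun k => hμ _) σ hσ
    refine τ.oval_eq_zero_iff.2 fun K hK => ?_
    let e := Homeomorph.piFinSuccAbove X 0
    rw [← τ.cval_closeds, hτσ K K.isClosed]
    refine tensorVal₂_eq_zero_of_disjoint ast (hμ 0) hσA (e.isClosedMap K K.isClosed) ?_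
    have hpre : e ⁻¹' (A 0 ×ˢ univ.pi fun k => A (Fin.succAbove 0 k)) = univ.pi A :=
      Homeomorph.piFinSuccAbove_preimage_prod_pi 0 A
    rw [← subset_compl_iff_disjoint_right, image_subset_iff, preimage_compl]
    exact hpre ▸ hK

/-- if `μᵢ(Xᵢ ∖ Aᵢ) = 0` (value on the open complement via the
sup-extension) for closed sets `Aᵢ`, then the tensor product (generated by any
continuous t-norm) of the `μᵢ` vanishes on `∏ Xᵢ ∖ ∏ Aᵢ`. -/
theorem tensor_product_supported_in_product {m : ℕ} (X : Fin m → Type u)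
    [∀ j, TopologicalSpace (X j)] [∀ j, CompactSpace (X j)] [∀ j, T2Space (X j)]
    (ast : Tnorm) (hast : ast.Cont)
    (A : ∀ j, Set (X j)) (hA : ∀ j, IsClosed (A j))
    (μ : ∀ j, Capacity (X j)) (hμ : ∀ j, (μ j).oval ((A j)ᶜ) = 0)
    (τ : Capacity (∀ j, X j)) (hτ : IsTensorRec ast μ τ) :
    τ.oval ((Set.univ.pi A)ᶜ) = 0 :=
  tensor_product_supported_in_product_general X ast A μ hμ τ hτ
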